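/- Far-away loops with small action gradient have small period and small derivative (Lemma 4.3): Let H:ℝ^{2n}→ℝ be smooth, satisfying (H1) with constants c₁,c₂,c₃ and with quadratic growth constants M,h₁ (‖Hess_xH‖≤M, ‖∇H(x)‖≤h₁+M‖x‖ for all x). Fix 𝔞>0. Then for every δ>0 there exist ε₁(δ)>0 and 𝗏₁(δ)>0, depending only on δ, 𝔞 and (c₁,c₂,c₃,M,h₁), such that whenever a loop v and η∈ℝ satisfy |𝒜^H(v,η)|≤𝔞, ‖∇𝒜^H(v,η)‖≤ε₁(δ) and ‖v‖_{L²}>𝗏₁(δ), then |η|≤δ and ‖∂_tv‖_{L²}≤δ. One may take ε₁(δ)=(δ/2)·min{c₂/(2Mc₁),1}. -/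

import Mathlib

open MeasureTheory intervalIntegral Set
open scoped RealInnerProductSpace Topology

noncomputable section

/-- Phase space `ℝ^{2n}`, realized as `ℂ^n` with its real inner product. -/
abbrev E (n : ℕ) := EuclideanSpace ℂ (Fin n)

/-- The standard linear complex structure `J₀` (multiplication by `i`). -/
def J0 {n : ℕ} (x : E n) : E n := Complex.I • x

/-- The standard symplectic form `ω₀(u,w) = ⟨J₀u, w⟩`. -/
def om {n : ℕ} (u w : E n) : ℝ := @inner ℝ _ _ (J0 u) w

/-- The Hamiltonian vector field `X^H = J₀ ∇H`. -/
def XH {n : ℕ} (H : E n → ℝ) (x : E n) : E n := J0 (gradient H x)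

/-- A loop: a smooth 1-periodic map `ℝ → ℝ^{2n}`. -/
def IsLoop {n : ℕ} (v : ℝ → E n) : Prop := ContDiff ℝ (⊤ : ℕ∞) v ∧ ∀ t, v (t + 1) = v t

/-- The `L²` norm on loops. -/
def L2 {n : ℕ} (v : ℝ → E n) : ℝ := Real.sqrt (∫ t in (0:ℝ)..1, ‖v t‖ ^ 2)

/-- The Rabinowitz action functional. -/
def RabAction {n : ℕ} (H : E n → ℝ) (v : ℝ → E n) (η : ℝ) : ℝ :=
  (∫ t in (0:ℝ)..1, (1 / 2) * om (v t) (deriv v t)) - η * ∫ t in (0:ℝ)..1, H (v t)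

/-- The norm `‖∇𝒜^H(v,η)‖ = ‖∂_t v − η X^H(v)‖_{L²} + |∫₀¹ H(v)|` of the `L²` gradient. -/
def gradNorm {n : ℕ} (H : E n → ℝ) (v : ℝ → E n) (η : ℝ) : ℝ :=
  L2 (fun t => deriv v t - η • XH H (v t)) + |∫ t in (0:ℝ)..1, H (v t)|

/-- A Liouville vector field on a set `U`. -/
def IsLiouvilleOn {n : ℕ} (X : E n → E n) (U : Set (E n)) : Prop :=
  ∀ x ∈ U, ∀ u w : E n, om (fderiv ℝ X x u) w + om u (fderiv ℝ X x w) = om u w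

/-- Condition (H1). -/
def SatH1 {n : ℕ} (H : E n → ℝ) (c₁ c₂ c₃ : ℝ) : Prop :=
  ∃ X : E n → E n, ContDiff ℝ (⊤ : ℕ∞) X ∧ IsLiouvilleOn X Set.univ ∧
    (∀ x, ‖X x‖ ≤ c₁ * (‖x‖ + 1)) ∧ ∀ x, fderiv ℝ H x (X x) ≥ c₂ * ‖x‖ ^ 2 - c₃

/-- Condition (H2). -/
def SatH2 {n : ℕ} (H : E n → ℝ) (L : ℝ) : Prop :=
  ∀ x, ‖iteratedFDeriv ℝ 3 H x‖ * ‖x‖ ≤ L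

/-- Condition (H3). -/
def SatH3 {n : ℕ} (H : E n → ℝ) (c₄ c₅ ν : ℝ) : Prop :=
  ∃ X : E n → E n, IsLiouvilleOn X (H ⁻¹' Ioo (-ν) ν) ∧
    (∀ x ∈ H ⁻¹' Ioo (-ν) ν, ‖X x‖ ≤ c₄ * (‖x‖ ^ 2 + 1)) ∧
    ∀ x ∈ H ⁻¹' Ioo (-ν) ν, fderiv ℝ H x (X x) ≥ c₅

/-- Admissible Hamiltonians. -/
def Admissible {n : ℕ} (H : E n → ℝ) : Prop :=
  ContDiff ℝ (⊤ : ℕ∞) H ∧ ∃ c₁ c₂ c₃ L c₄ c₅ ν : ℝ,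
    0 < c₁ ∧ 0 < c₂ ∧ 0 ≤ c₃ ∧ 0 ≤ L ∧ 0 < c₄ ∧ 0 < c₅ ∧ 0 < ν ∧
    SatH1 H c₁ c₂ c₃ ∧ SatH2 H L ∧ SatH3 H c₄ c₅ ν

/-- Uniform bound on the Hessian. -/
def HessBound {n : ℕ} (H : E n → ℝ) (M : ℝ) : Prop :=
  ∀ x, ‖iteratedFDeriv ℝ 2 H x‖ ≤ M

/-- Linear growth of the gradient. -/
def GradBound {n : ℕ} (H : E n → ℝ) (M h₁ : ℝ) : Prop :=
  ∀ x, ‖gradient H x‖ ≤ h₁ + M * ‖x‖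


set_option maxHeartbeats 2000000

lemma real_inner_eq_re {n : ℕ} (x y : E n) : ⟪x, y⟫ = (@inner ℂ _ _ x y).re := by
  simp [PiLp.inner_apply, Complex.re_sum]

lemma om_eq_im {n : ℕ} (u w : E n) : om u w = (@inner ℂ _ _ u w).im := by
  rw [om, J0, real_inner_eq_re, inner_smul_left]; simp

lemma om_smul_left {n : ℕ} (r : ℝ) (u w : E n) : om (r • u) w = r * om u w := by
  rw [om_eq_im, om_eq_im, show r • u = (r : ℂ) • u from (Complex.coe_smul r u).symm,
    inner_smul_left]
  simp
lemma om_smul_right {n : ℕ} (r : ℝ) (u w : E n) : om u (r • w) = r * om u w := by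
  rw [om_eq_im, om_eq_im, show r • w = (r : ℂ) • w from (Complex.coe_smul r w).symm,
    inner_smul_right]
  simp
lemma om_swap {n : ℕ} (u w : E n) : om w u = - om u w := by
  rw [om_eq_im, om_eq_im, ← inner_conj_symm u w, Complex.conj_im, neg_neg]
lemma om_add_left {n : ℕ} (u v w : E n) : om (u + v) w = om u w + om v w := by
  rw [om_eq_im, om_eq_im, om_eq_im, inner_add_left, Complex.add_im]
lemma om_add_right {n : ℕ} (u v w : E n) : om u (v + w) = om u v + om u w := by
  rw [om_eq_im, om_eq_im, om_eq_im, inner_add_right, Complex.add_im]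
lemma om_sub_left {n : ℕ} (u v w : E n) : om (u - v) w = om u w - om v w := by
  rw [om_eq_im, om_eq_im, om_eq_im, inner_sub_left, Complex.sub_im]
lemma om_sub_right {n : ℕ} (u v w : E n) : om u (v - w) = om u v - om u w := by
  rw [om_eq_im, om_eq_im, om_eq_im, inner_sub_right, Complex.sub_im]

lemma abs_om_le {n : ℕ} (u w : E n) : |om u w| ≤ ‖u‖ * ‖w‖ := by
  rw [om_eq_im]
  calc |(@inner ℂ _ _ u w).im| ≤ ‖(@inner ℂ _ _ u w)‖ := Complex.abs_im_le_norm _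
  _ ≤ ‖u‖ * ‖w‖ := norm_inner_le_norm u w

lemma om_J0_right {n : ℕ} (u w : E n) : om u (J0 w) = ⟪u, w⟫ := by
  rw [om_eq_im, J0, inner_smul_right, real_inner_eq_re]; simp

lemma continuous_om {n : ℕ} : Continuous (fun p : E n × E n => om p.1 p.2) := by
  have : Continuous (fun p : E n × E n => (Complex.I • p.1 : E n)) := by fun_prop
  exact this.inner continuous_snd

lemma continuous_om_comp {X : Type*} [TopologicalSpace X] {n : ℕ} {f g : X → E n}
    (hf : Continuous f) (hg : Continuous g) : Continuous fun x => om (f x) (g x) := by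
  show Continuous fun x => ⟪Complex.I • f x, g x⟫
  exact (hf.const_smul Complex.I).inner hg

example {n : ℕ} (f g : ℝ → E n) (f' g' : E n) (t : ℝ) (hf : HasDerivAt f f' t)
    (hg : HasDerivAt g g' t) :
    HasDerivAt (fun t => ⟪f t, g t⟫) (⟪f t, g'⟫ + ⟪f', g t⟫) t := hf.inner ℝ hg

example {n : ℕ} (f : ℝ → E n) (f' : E n) (t : ℝ) (hf : HasDerivAt f f' t) :
    HasDerivAt (fun t => Complex.I • f t) (Complex.I • f') t := hf.const_smul Complex.I

example {n : ℕ} (x : E n) (s : ℝ) : HasDerivAt (fun s : ℝ => s • x) x s := by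
  simpa using (hasDerivAt_id s).smul_const x

/-- Auxiliary integrand for the homotopy/Fubini argument. -/
def Dfun {n : ℕ} (Y : E n → E n) (v : ℝ → E n) (s t : ℝ) : ℝ :=
  om (fderiv ℝ Y (s • v t) (s • deriv v t)) (v t) + om (Y (s • v t)) (deriv v t)

lemma loop_ht {n : ℕ} (Y : E n → E n) (hY : ContDiff ℝ (⊤ : ℕ∞) Y) (v : ℝ → E n)
    (hv : ContDiff ℝ (⊤ : ℕ∞) v) (s t : ℝ) :
    HasDerivAt (fun t => om (Y (s • v t)) (v t)) (Dfun Y v s t) t := by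
  have hvd : ∀ t, HasDerivAt v (deriv v t) t := fun t => ((hv.differentiable (by simp)) t).hasDerivAt
  have h2 : HasDerivAt (fun t => s • v t) (s • deriv v t) t := (hvd t).const_smul s
  have h3 : HasDerivAt (fun t => Y (s • v t)) (fderiv ℝ Y (s • v t) (s • deriv v t)) t :=
    ((hY.differentiable (by simp)) (s • v t)).hasFDerivAt.comp_hasDerivAt t h2
  have h4 := (h3.fun_const_smul Complex.I).inner ℝ (hvd t)
  have e : (fun t => om (Y (s • v t)) (v t)) = fun t => ⟪Complex.I • Y (s • v t), v t⟫ := rfl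
  rw [e]
  convert h4 using 1
  show om (fderiv ℝ Y (s • v t) (s • deriv v t)) (v t) + om (Y (s • v t)) (deriv v t)
    = om (Y (s • v t)) (deriv v t) + om (fderiv ℝ Y (s • v t) (s • deriv v t)) (v t)
  ring
  all_goals rfl

lemma loop_hs {n : ℕ} (Y : E n → E n) (hY : ContDiff ℝ (⊤ : ℕ∞) Y)
    (hsym : ∀ x u w, om (fderiv ℝ Y x u) w = om (fderiv ℝ Y x w) u)
    (v : ℝ → E n) (hv : ContDiff ℝ (⊤ : ℕ∞) v) (s t : ℝ) :
    HasDerivAt (fun s => s * om (Y (s • v t)) (deriv v t)) (Dfun Y v s t) s := by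
  have h2 : HasDerivAt (fun s : ℝ => s • v t) (v t) s := by
    have h0 : HasDerivAt (fun s : ℝ => s • v t) ((1:ℝ) • v t) s :=
      HasDerivAt.smul_const (hasDerivAt_id s) (v t)
    rwa [one_smul] at h0
  have h3 : HasDerivAt (fun s => Y (s • v t)) (fderiv ℝ Y (s • v t) (v t)) s :=
    ((hY.differentiable (by simp)) (s • v t)).hasFDerivAt.comp_hasDerivAt s h2
  have h4 := (h3.fun_const_smul Complex.I).inner ℝ (hasDerivAt_const s (deriv v t))
  have h5 : HasDerivAt (fun s => om (Y (s • v t)) (deriv v t))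
      (om (fderiv ℝ Y (s • v t) (v t)) (deriv v t)) s := by
    have e : (fun s : ℝ => om (Y (s • v t)) (deriv v t))
        = fun s : ℝ => ⟪Complex.I • Y (s • v t), deriv v t⟫ := rfl
    rw [e]
    convert h4 using 1
    show om (fderiv ℝ Y (s • v t) (v t)) (deriv v t)
      = om (Y (s • v t)) (0 : E n) + om (fderiv ℝ Y (s • v t) (v t)) (deriv v t)
    have e0 : om (Y (s • v t)) (0 : E n) = 0 := by
      simpa using om_smul_right 0 (Y (s • v t)) 0
    rw [e0, zero_add]
    all_goals rfl
  have h6 := (hasDerivAt_id s).fun_mul h5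
  convert h6 using 1
  show om (fderiv ℝ Y (s • v t) (s • deriv v t)) (v t) + om (Y (s • v t)) (deriv v t)
    = 1 * om (Y (s • v t)) (deriv v t) + s * om (fderiv ℝ Y (s • v t) (v t)) (deriv v t)
  rw [(fderiv ℝ Y (s • v t)).map_smul, om_smul_left, hsym (s • v t) (v t) (deriv v t)]
  ring
  all_goals rfl

lemma loop_contD {n : ℕ} (Y : E n → E n) (hY : ContDiff ℝ (⊤ : ℕ∞) Y) (v : ℝ → E n)
    (hv : ContDiff ℝ (⊤ : ℕ∞) v) :
    Continuous fun p : ℝ × ℝ => Dfun Y v p.1 p.2 := by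
  have hv' : Continuous (deriv v) := hv.continuous_deriv (by simp)
  have hvc : Continuous v := hv.continuous
  have c1 : Continuous fun p : ℝ × ℝ => p.1 • v p.2 :=
    continuous_fst.smul (hvc.comp continuous_snd)
  have c2 : Continuous fun p : ℝ × ℝ => p.1 • deriv v p.2 :=
    continuous_fst.smul (hv'.comp continuous_snd)
  have c3 : Continuous fun p : ℝ × ℝ => fderiv ℝ Y (p.1 • v p.2) (p.1 • deriv v p.2) :=
    ((hY.continuous_fderiv (by simp)).comp c1).clm_apply c2
  show Continuous fun p : ℝ × ℝ =>
    (⟪Complex.I • fderiv ℝ Y (p.1 • v p.2) (p.1 • deriv v p.2), v p.2⟫)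
      + ⟪Complex.I • Y (p.1 • v p.2), deriv v p.2⟫
  exact ((c3.const_smul Complex.I).inner (hvc.comp continuous_snd)).add
    (((hY.continuous.comp c1).const_smul Complex.I).inner (hv'.comp continuous_snd))

lemma loop_zero {n : ℕ} (Y : E n → E n) (hY : ContDiff ℝ (⊤ : ℕ∞) Y)
    (hsym : ∀ x u w, om (fderiv ℝ Y x u) w = om (fderiv ℝ Y x w) u)
    (v : ℝ → E n) (hv : ContDiff ℝ (⊤ : ℕ∞) v) (hper : v 1 = v 0) :
    ∫ t in (0:ℝ)..1, om (Y (v t)) (deriv v t) = 0 := by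
  have contD := loop_contD Y hY v hv
  have key : ∀ t, om (Y (v t)) (deriv v t) = ∫ s in (0:ℝ)..1, Dfun Y v s t := by
    intro t
    have hint : IntervalIntegrable (fun s => Dfun Y v s t) volume 0 1 :=
      (contD.comp (continuous_id.prodMk continuous_const)).intervalIntegrable 0 1
    have := intervalIntegral.integral_eq_sub_of_hasDerivAt
      (f := fun s => s * om (Y (s • v t)) (deriv v t)) (fun s _ => loop_hs Y hY hsym v hv s t) hint
    rw [this]
    show om (Y (v t)) (deriv v t) = 1 * om (Y ((1:ℝ) • v t)) (deriv v t)
      - 0 * om (Y ((0:ℝ) • v t)) (deriv v t)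
    rw [one_smul, one_mul, zero_mul, sub_zero]
  have key2 : ∀ s, (∫ t in (0:ℝ)..1, Dfun Y v s t) = 0 := by
    intro s
    have hint : IntervalIntegrable (fun t => Dfun Y v s t) volume 0 1 :=
      (contD.comp (continuous_const.prodMk continuous_id)).intervalIntegrable 0 1
    have := intervalIntegral.integral_eq_sub_of_hasDerivAt
      (f := fun t => om (Y (s • v t)) (v t)) (fun t _ => loop_ht Y hY v hv s t) hint
    rw [this]
    show om (Y (s • v 1)) (v 1) - om (Y (s • v 0)) (v 0) = 0
    rw [hper, sub_self]
  calc ∫ t in (0:ℝ)..1, om (Y (v t)) (deriv v t)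
      = ∫ t in (0:ℝ)..1, ∫ s in (0:ℝ)..1, Dfun Y v s t := by
        apply intervalIntegral.integral_congr; intro t _; exact key t
    _ = ∫ s in (0:ℝ)..1, ∫ t in (0:ℝ)..1, Dfun Y v s t := by
        rw [intervalIntegral.integral_of_le zero_le_one,
          intervalIntegral.integral_of_le zero_le_one]
        simp_rw [intervalIntegral.integral_of_le (zero_le_one (α := ℝ))]
        have hmeas : (volume.restrict (Ioc (0:ℝ) 1)).prod (volume.restrict (Ioc (0:ℝ) 1))
            = ((volume : Measure ℝ).prod (volume : Measure ℝ)).restrict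
              ((Ioc (0:ℝ) 1) ×ˢ (Ioc (0:ℝ) 1)) := Measure.prod_restrict _ _
        have hInt : Integrable (Function.uncurry (fun t s => Dfun Y v s t))
            ((volume.restrict (Ioc (0:ℝ) 1)).prod (volume.restrict (Ioc (0:ℝ) 1))) := by
          rw [hmeas]
          exact MeasureTheory.IntegrableOn.mono_set
            (ContinuousOn.integrableOn_compact (isCompact_Icc.prod isCompact_Icc)
              (contD.comp continuous_swap).continuousOn)
            (Set.prod_mono Ioc_subset_Icc_self Ioc_subset_Icc_self)
        exact MeasureTheory.integral_integral_swap hInt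
    _ = 0 := by
      rw [intervalIntegral.integral_congr (fun s _ => key2 s)]
      simp

lemma L2_nonneg {n : ℕ} (f : ℝ → E n) : 0 ≤ L2 f := Real.sqrt_nonneg _

lemma L2_sq {n : ℕ} (f : ℝ → E n) : (L2 f) ^ 2 = ∫ t in (0:ℝ)..1, ‖f t‖ ^ 2 :=
  Real.sq_sqrt (intervalIntegral.integral_nonneg zero_le_one (fun t _ => sq_nonneg _))

/-- Cauchy–Schwarz for interval integrals of continuous functions. -/
lemma CS_scalar (f g : ℝ → ℝ) (hf : Continuous f) (hg : Continuous g) :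
    ∫ t in (0:ℝ)..1, f t * g t
      ≤ Real.sqrt (∫ t in (0:ℝ)..1, (f t) ^ 2) * Real.sqrt (∫ t in (0:ℝ)..1, (g t) ^ 2) := by
  set A := ∫ t in (0:ℝ)..1, (f t) ^ 2 with hA
  set B := ∫ t in (0:ℝ)..1, (g t) ^ 2 with hB
  set C := ∫ t in (0:ℝ)..1, f t * g t with hC
  have hA0 : 0 ≤ A := intervalIntegral.integral_nonneg zero_le_one (fun t _ => sq_nonneg _)
  have hB0 : 0 ≤ B := intervalIntegral.integral_nonneg zero_le_one (fun t _ => sq_nonneg _)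
  rcases le_or_gt C 0 with hC0 | hC0
  · exact hC0.trans (mul_nonneg (Real.sqrt_nonneg _) (Real.sqrt_nonneg _))
  have expand : ∀ l : ℝ, 0 ≤ l ^ 2 * A - 2 * l * C + B := by
    intro l
    have h1 : (0:ℝ) ≤ ∫ t in (0:ℝ)..1, (l * f t - g t) ^ 2 :=
      intervalIntegral.integral_nonneg zero_le_one (fun t _ => sq_nonneg _)
    have h2 : (∫ t in (0:ℝ)..1, (l * f t - g t) ^ 2) = l ^ 2 * A - 2 * l * C + B := by
      have e : ∀ t : ℝ, (l * f t - g t) ^ 2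
          = l ^ 2 * (f t) ^ 2 - (2 * l) * (f t * g t) + (g t) ^ 2 := by intro t; ring
      simp_rw [e]
      rw [intervalIntegral.integral_add (((continuous_const.fun_mul (hf.fun_pow 2)).fun_sub
            (continuous_const.fun_mul (hf.fun_mul hg))).intervalIntegrable 0 1)
            ((hg.fun_pow 2).intervalIntegrable 0 1),
          intervalIntegral.integral_sub ((continuous_const.fun_mul (hf.fun_pow 2)).intervalIntegrable 0 1)
            ((continuous_const.fun_mul (hf.fun_mul hg)).intervalIntegrable 0 1),
          intervalIntegral.integral_const_mul, intervalIntegral.integral_const_mul]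
    linarith [h2 ▸ h1]
  have hApos : 0 < A := by
    rcases hA0.lt_or_eq with h | h
    · exact h
    · exfalso
      have := expand ((B + 1) / (2 * C))
      rw [← h] at this
      have h2C : (0:ℝ) < 2 * C := by linarith
      have : 0 ≤ -(B + 1) + B := by
        have e : ((B + 1) / (2 * C)) ^ 2 * 0 - 2 * ((B + 1) / (2 * C)) * C + B
            = -(B + 1) + B := by field_simp; ring
        linarith [e ▸ this]
      linarith
  have hC2 : C ^ 2 ≤ A * B := by
    have h1 := expand (C / A)
    have e : (C / A) ^ 2 * A - 2 * (C / A) * C + B = B - C ^ 2 / A := by field_simp; ring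
    have h3 : C ^ 2 / A ≤ B := by linarith [e ▸ h1]
    have := (div_le_iff₀ hApos).1 h3
    linarith [this, mul_comm B A]
  calc C ≤ Real.sqrt (C ^ 2) := by rw [Real.sqrt_sq hC0.le]
    _ ≤ Real.sqrt (A * B) := Real.sqrt_le_sqrt hC2
    _ = Real.sqrt A * Real.sqrt B := Real.sqrt_mul hA0 _

lemma sqrt_le_then (a K : ℝ) (ha : 0 ≤ a) (h : Real.sqrt a ≤ K) : a ≤ K ^ 2 := by
  nlinarith [Real.sq_sqrt ha, Real.sqrt_nonneg a]

lemma arith1 (c₁ c₂ δ 𝔞 ε₁ K A : ℝ) (hc₂ : 0 < c₂) (hδ : 0 < δ) (hc₁ : 0 < c₁)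
    (hε₁ : 0 < ε₁) (hK1 : 1 ≤ K) (hA0 : 0 ≤ A)
    (hEta : A * ((3/4) * (c₂ * K ^ 2)) ≤ 𝔞 + c₁ * (K + 1) * ε₁)
    (hSq2 : 8 * 𝔞 ≤ 3 * c₂ * δ * K ^ 2) (hG5 : 16 * c₁ * ε₁ ≤ 3 * c₂ * δ * K) : A ≤ δ := by
  have hK0 : (0:ℝ) ≤ K := by linarith
  nlinarith [mul_le_mul_of_nonneg_right hG5 hK0,
    mul_nonneg (mul_nonneg hc₁.le hε₁.le) (by linarith : (0:ℝ) ≤ K - 1),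
    mul_pos hc₂ (by nlinarith : (0:ℝ) < K ^ 2)]

lemma arith2 (c₁ c₂ δ 𝔞 ε₁ K M h₁ : ℝ) (hc₂ : 0 < c₂) (hδ : 0 < δ) (hc₁ : 0 < c₁)
    (hε₁ : 0 < ε₁) (hK1 : 1 ≤ K) (h𝔞 : 0 < 𝔞) (hM : 0 < M) (hh₁ : 0 ≤ h₁)
    (hG1 : 16 * 𝔞 * (h₁ + M) ≤ c₂ * δ * K)
    (hG3 : 16 * c₁ * ε₁ * (2 * h₁ + M) ≤ c₂ * δ * K)
    (hε₁M : ε₁ * (4 * M * c₁) ≤ δ * c₂) :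
    (𝔞 + c₁ * (K + 1) * ε₁) * (h₁ + M * K) ≤ (δ / 2) * ((3/4) * (c₂ * K ^ 2)) := by
  have hK0 : (0:ℝ) ≤ K := by linarith
  nlinarith [mul_le_mul_of_nonneg_right hG1 hK0,
    mul_le_mul_of_nonneg_right hG3 hK0,
    mul_le_mul_of_nonneg_right hε₁M (sq_nonneg K),
    mul_nonneg (mul_nonneg h𝔞.le hh₁) (by linarith : (0:ℝ) ≤ K - 1),
    mul_nonneg (mul_nonneg (mul_nonneg hc₁.le hε₁.le) hh₁) (by linarith : (0:ℝ) ≤ K - 1)]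


lemma integral_norm_le_L2 {n : ℕ} (f : ℝ → E n) (hf : Continuous f) :
    (∫ t in (0:ℝ)..1, ‖f t‖) ≤ L2 f := by
  have h := CS_scalar (fun _ => (1:ℝ)) (fun t => ‖f t‖) continuous_const hf.norm
  simpa [L2] using h

/-- Cauchy–Schwarz: inner-product form. -/
lemma CS_inner {n : ℕ} (f g : ℝ → E n) (hf : Continuous f) (hg : Continuous g) :
    |∫ t in (0:ℝ)..1, ⟪f t, g t⟫| ≤ L2 f * L2 g := by
  calc |∫ t in (0:ℝ)..1, ⟪f t, g t⟫| ≤ ∫ t in (0:ℝ)..1, |⟪f t, g t⟫| :=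
      intervalIntegral.abs_integral_le_integral_abs zero_le_one
    _ ≤ ∫ t in (0:ℝ)..1, ‖f t‖ * ‖g t‖ := by
      apply intervalIntegral.integral_mono_on zero_le_one
        ((hf.inner hg).abs.intervalIntegrable 0 1)
        ((hf.norm.mul hg.norm).intervalIntegrable 0 1)
      exact fun t _ => abs_real_inner_le_norm _ _
    _ ≤ L2 f * L2 g := CS_scalar _ _ hf.norm hg.norm

/-- Cauchy–Schwarz with `om`. -/
lemma CS_om {n : ℕ} (f g : ℝ → E n) (hf : Continuous f) (hg : Continuous g) :
    |∫ t in (0:ℝ)..1, om (f t) (g t)| ≤ L2 f * L2 g := by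
  calc |∫ t in (0:ℝ)..1, om (f t) (g t)| ≤ ∫ t in (0:ℝ)..1, |om (f t) (g t)| :=
      intervalIntegral.abs_integral_le_integral_abs zero_le_one
    _ ≤ ∫ t in (0:ℝ)..1, ‖f t‖ * ‖g t‖ := by
      apply intervalIntegral.integral_mono_on zero_le_one
      · exact (continuous_om_comp hf hg).abs.intervalIntegrable 0 1
      · exact (hf.norm.mul hg.norm).intervalIntegrable 0 1
      · exact fun t _ => abs_om_le _ _
    _ ≤ L2 f * L2 g := CS_scalar _ _ hf.norm hg.norm

lemma inner_gradient {n : ℕ} (H : E n → ℝ) (x u : E n) :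
    ⟪gradient H x, u⟫ = fderiv ℝ H x u := InnerProductSpace.toDual_symm_apply

lemma continuous_gradient {n : ℕ} {H : E n → ℝ} (hH : ContDiff ℝ (⊤ : ℕ∞) H) :
    Continuous (gradient H) := by
  show Continuous fun x => (InnerProductSpace.toDual ℝ (E n)).symm (fderiv ℝ H x)
  exact (InnerProductSpace.toDual ℝ (E n)).symm.continuous.comp (hH.continuous_fderiv (by simp))

lemma om_XH {n : ℕ} (H : E n → ℝ) (a x : E n) :
    om a (XH H x) = fderiv ℝ H x a := by
  rw [XH, om_J0_right, real_inner_comm, inner_gradient]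

lemma norm_XH {n : ℕ} (H : E n → ℝ) (x : E n) : ‖XH H x‖ = ‖gradient H x‖ := by
  rw [XH, J0, norm_smul, Complex.norm_I, one_mul]

lemma continuous_XH {n : ℕ} {H : E n → ℝ} (hH : ContDiff ℝ (⊤ : ℕ∞) H) :
    Continuous (XH H) := by
  show Continuous fun x => Complex.I • gradient H x
  exact (continuous_gradient hH).const_smul Complex.I

lemma action_identity {n : ℕ} (H : E n → ℝ) (hH : ContDiff ℝ (⊤ : ℕ∞) H)
    (X : E n → E n) (hX : ContDiff ℝ (⊤ : ℕ∞) X)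
    (hLiou : ∀ x u w, om (fderiv ℝ X x u) w + om u (fderiv ℝ X x w) = om u w)
    (v : ℝ → E n) (hv : ContDiff ℝ (⊤ : ℕ∞) v) (hper : v 1 = v 0) (η : ℝ) :
    η * ∫ t in (0:ℝ)..1, fderiv ℝ H (v t) (X (v t))
      = RabAction H v η + η * (∫ t in (0:ℝ)..1, H (v t))
        - ∫ t in (0:ℝ)..1, om (X (v t)) (deriv v t - η • XH H (v t)) := by
  have hvc : Continuous v := hv.continuous
  have hv' : Continuous (deriv v) := hv.continuous_deriv (by simp)
  have hXc : Continuous X := hX.continuous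
  have cXv : Continuous fun t => X (v t) := hXc.comp hvc
  have cOm1 : Continuous fun t => om (X (v t)) (deriv v t) := continuous_om_comp cXv hv'
  have cOm2 : Continuous fun t => (1 / 2 : ℝ) * om (v t) (deriv v t) :=
    continuous_const.mul (continuous_om_comp hvc hv')
  have cfH : Continuous fun t => fderiv ℝ H (v t) := (hH.continuous_fderiv (by simp)).comp hvc
  have cdHX : Continuous fun t => fderiv ℝ H (v t) (X (v t)) := cfH.clm_apply cXv
  -- step 1: the Liouville loop identity
  set Y : E n → E n := fun x => X x - (2⁻¹ : ℝ) • x with hYdef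
  have hY : ContDiff ℝ (⊤ : ℕ∞) Y := hX.sub (contDiff_id.const_smul _)
  have hXd : Differentiable ℝ X := hX.differentiable (by simp)
  have hfY : ∀ x : E n, fderiv ℝ Y x
      = fderiv ℝ X x - (2⁻¹ : ℝ) • ContinuousLinearMap.id ℝ (E n) := by
    intro x
    have h : HasFDerivAt Y (fderiv ℝ X x - (2⁻¹ : ℝ) • ContinuousLinearMap.id ℝ (E n)) x :=
      ((hXd x).hasFDerivAt).sub ((hasFDerivAt_id x).const_smul (2⁻¹ : ℝ))
    exact h.fderiv
  have hsym : ∀ x u w, om (fderiv ℝ Y x u) w = om (fderiv ℝ Y x w) u := by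
    intro x u w
    rw [hfY]
    simp only [ContinuousLinearMap.coe_sub', Pi.sub_apply, ContinuousLinearMap.coe_smul',
      Pi.smul_apply, ContinuousLinearMap.coe_id', id_eq]
    rw [om_sub_left, om_sub_left, om_smul_left, om_smul_left]
    have h1 := hLiou x u w
    have h2 : om u (fderiv ℝ X x w) = - om (fderiv ℝ X x w) u := om_swap _ _
    have h3 : om w u = - om u w := om_swap _ _
    linarith
  have hloop : (∫ t in (0:ℝ)..1, om (Y (v t)) (deriv v t)) = 0 :=
    loop_zero Y hY hsym v hv hper
  have hsplit : (∫ t in (0:ℝ)..1, om (X (v t)) (deriv v t))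
      = ∫ t in (0:ℝ)..1, (1 / 2) * om (v t) (deriv v t) := by
    have e : ∀ t : ℝ, om (Y (v t)) (deriv v t)
        = om (X (v t)) (deriv v t) - (1 / 2) * om (v t) (deriv v t) := by
      intro t
      rw [hYdef]
      simp only
      rw [om_sub_left, om_smul_left]
      norm_num
    rw [intervalIntegral.integral_congr (fun t _ => e t)] at hloop
    rw [intervalIntegral.integral_sub (cOm1.intervalIntegrable 0 1)
      (cOm2.intervalIntegrable 0 1)] at hloop
    linarith
  -- step 2: expand the om integral
  have hexp : (∫ t in (0:ℝ)..1, om (X (v t)) (deriv v t - η • XH H (v t)))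
      = (∫ t in (0:ℝ)..1, om (X (v t)) (deriv v t))
        - η * ∫ t in (0:ℝ)..1, fderiv ℝ H (v t) (X (v t)) := by
    have e : ∀ t : ℝ, om (X (v t)) (deriv v t - η • XH H (v t))
        = om (X (v t)) (deriv v t) - η * fderiv ℝ H (v t) (X (v t)) := by
      intro t
      rw [om_sub_right, om_smul_right, om_XH]
    rw [intervalIntegral.integral_congr (fun t _ => e t)]
    rw [intervalIntegral.integral_sub (cOm1.intervalIntegrable 0 1)
      ((continuous_const.fun_mul cdHX).intervalIntegrable 0 1)]
    rw [intervalIntegral.integral_const_mul]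
  rw [RabAction, hexp, hsplit]
  ring


/-- **Lemma 4.3 (far-away loops with small action gradient have small period and derivative).** -/
theorem faraway_loops_small_period (n : ℕ)
    (c₁ c₂ c₃ M h₁ 𝔞 : ℝ)
    (hc₁ : 0 < c₁) (hc₂ : 0 < c₂) (hc₃ : 0 ≤ c₃) (hM : 0 < M) (hh₁ : 0 ≤ h₁)
    (h𝔞 : 0 < 𝔞) :
    ∀ δ : ℝ, 0 < δ →
      ∃ ε₁ v₁ : ℝ, 0 < ε₁ ∧ 0 < v₁ ∧
        ε₁ = (δ / 2) * min (c₂ / (2 * M * c₁)) 1 ∧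
        ∀ H : E n → ℝ, ContDiff ℝ (⊤ : ℕ∞) H →
          SatH1 H c₁ c₂ c₃ → HessBound H M → GradBound H M h₁ →
          ∀ (v : ℝ → E n) (η : ℝ), IsLoop v →
            |RabAction H v η| ≤ 𝔞 → gradNorm H v η ≤ ε₁ → v₁ < L2 v →
            |η| ≤ δ ∧ L2 (fun t => deriv v t) ≤ δ := by
  intro δ hδ
  have h2Mc₁ : (0:ℝ) < 2 * M * c₁ := by positivity
  have hmin : 0 < min (c₂ / (2 * M * c₁)) 1 := lt_min (div_pos hc₂ h2Mc₁) one_pos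
  set ε₁ := (δ / 2) * min (c₂ / (2 * M * c₁)) 1 with hε₁def
  have hε₁pos : 0 < ε₁ := mul_pos (by linarith) hmin
  have hε₁δ : ε₁ ≤ δ / 2 := by
    have h1 : min (c₂ / (2 * M * c₁)) 1 ≤ 1 := min_le_right _ _
    nlinarith
  have hε₁M : ε₁ * (4 * M * c₁) ≤ δ * c₂ := by
    have h1 : min (c₂ / (2 * M * c₁)) 1 ≤ c₂ / (2 * M * c₁) := min_le_left _ _
    have h2 : ε₁ ≤ (δ / 2) * (c₂ / (2 * M * c₁)) := by nlinarith
    calc ε₁ * (4 * M * c₁) ≤ ((δ / 2) * (c₂ / (2 * M * c₁))) * (4 * M * c₁) := by nlinarith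
      _ = δ * c₂ := by field_simp; ring
  have hc₂δ : (0:ℝ) < c₂ * δ := mul_pos hc₂ hδ
  have h3c₂δ : (0:ℝ) < 3 * c₂ * δ := by linarith
  have s1 : 0 ≤ Real.sqrt (4 * (c₃ + ε₁) / c₂) := Real.sqrt_nonneg _
  have s2 : 0 ≤ 16 * 𝔞 * (h₁ + M) / (c₂ * δ) := by
    apply div_nonneg _ hc₂δ.le
    exact mul_nonneg (by linarith) (by linarith)
  have s3 : 0 ≤ 16 * c₁ * ε₁ * (2 * h₁ + M) / (c₂ * δ) := by
    apply div_nonneg _ hc₂δ.le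
    exact mul_nonneg (by positivity) (by linarith)
  have s4 : 0 ≤ Real.sqrt (8 * 𝔞 / (3 * c₂ * δ)) := Real.sqrt_nonneg _
  have s5 : 0 ≤ 16 * c₁ * ε₁ / (3 * c₂ * δ) := by
    apply div_nonneg _ h3c₂δ.le
    positivity
  refine ⟨ε₁, 1 + Real.sqrt (4 * (c₃ + ε₁) / c₂) + 16 * 𝔞 * (h₁ + M) / (c₂ * δ)
    + 16 * c₁ * ε₁ * (2 * h₁ + M) / (c₂ * δ) + Real.sqrt (8 * 𝔞 / (3 * c₂ * δ))
    + 16 * c₁ * ε₁ / (3 * c₂ * δ), hε₁pos, by linarith, rfl, ?_⟩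
  intro H hH hSat hHess hGrad v η hloop hact hgrad hKbig
  obtain ⟨X, hX, hLiouU, hXb, hH1⟩ := hSat
  have hLiou : ∀ x u w : E n, om (fderiv ℝ X x u) w + om u (fderiv ℝ X x w) = om u w :=
    fun x => hLiouU x (Set.mem_univ x)
  obtain ⟨hv, hperiod⟩ := hloop
  have hper1 : v 1 = v 0 := by simpa using hperiod 0
  -- continuity facts
  have hvc : Continuous v := hv.continuous
  have hv' : Continuous (deriv v) := hv.continuous_deriv (by simp)
  have hXc : Continuous X := hX.continuous
  have cXv : Continuous fun t => X (v t) := hXc.comp hvc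
  have cXHv : Continuous fun t => XH H (v t) := (continuous_XH hH).comp hvc
  have cw : Continuous fun t => deriv v t - η • XH H (v t) :=
    hv'.sub (cXHv.const_smul η)
  have cHv : Continuous fun t => H (v t) := hH.continuous.comp hvc
  have cfH : Continuous fun t => fderiv ℝ H (v t) := (hH.continuous_fderiv (by simp)).comp hvc
  have cdHX : Continuous fun t => fderiv ℝ H (v t) (X (v t)) := cfH.clm_apply cXv
  have cgrad : Continuous fun t => gradient H (v t) := (continuous_gradient hH).comp hvc
  -- quantities
  set K := L2 v with hKdef
  set g := L2 (fun t => deriv v t - η • XH H (v t)) with hgdef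
  set A := |η| with hAdef
  have hK0 : 0 ≤ K := L2_nonneg _
  have hg0 : 0 ≤ g := L2_nonneg _
  have hA0 : 0 ≤ A := abs_nonneg _
  have hgradN : g + |∫ t in (0:ℝ)..1, H (v t)| ≤ ε₁ := hgrad
  have hgε : g ≤ ε₁ := by
    have := abs_nonneg (∫ t in (0:ℝ)..1, H (v t)); linarith
  have hHε : |∫ t in (0:ℝ)..1, H (v t)| ≤ ε₁ := by linarith
  -- lower bounds on K
  have hK1 : (1:ℝ) ≤ K := by linarith
  have hKpos : (0:ℝ) < K := by linarith
  have hT3 : 16 * 𝔞 * (h₁ + M) / (c₂ * δ) ≤ K := by linarith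
  have hT4 : 16 * c₁ * ε₁ * (2 * h₁ + M) / (c₂ * δ) ≤ K := by linarith
  have hT5 : 16 * c₁ * ε₁ / (3 * c₂ * δ) ≤ K := by linarith
  have hSq1 : 4 * (c₃ + ε₁) ≤ c₂ * K ^ 2 := by
    have hs : Real.sqrt (4 * (c₃ + ε₁) / c₂) ≤ K := by linarith
    have harg : 0 ≤ 4 * (c₃ + ε₁) / c₂ := by
      apply div_nonneg _ hc₂.le; linarith
    have h3 := sqrt_le_then _ _ harg hs
    have h4 := (div_le_iff₀ hc₂).1 h3
    linarith
  have hSq2 : 8 * 𝔞 ≤ 3 * c₂ * δ * K ^ 2 := by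
    have hs : Real.sqrt (8 * 𝔞 / (3 * c₂ * δ)) ≤ K := by linarith
    have harg : 0 ≤ 8 * 𝔞 / (3 * c₂ * δ) := by
      apply div_nonneg _ h3c₂δ.le; linarith
    have h3 := sqrt_le_then _ _ harg hs
    have h4 := (div_le_iff₀ h3c₂δ).1 h3
    linarith
  have hG1 : 16 * 𝔞 * (h₁ + M) ≤ c₂ * δ * K := by
    have := (div_le_iff₀ hc₂δ).1 hT3; linarith
  have hG3 : 16 * c₁ * ε₁ * (2 * h₁ + M) ≤ c₂ * δ * K := by
    have := (div_le_iff₀ hc₂δ).1 hT4; linarith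
  have hG5 : 16 * c₁ * ε₁ ≤ 3 * c₂ * δ * K := by
    have := (div_le_iff₀ h3c₂δ).1 hT5; linarith
  -- square identities
  have hK2 : K ^ 2 = ∫ t in (0:ℝ)..1, ‖v t‖ ^ 2 := L2_sq v
  have hg2 : g ^ 2 = ∫ t in (0:ℝ)..1, ‖deriv v t - η • XH H (v t)‖ ^ 2 := L2_sq _
  -- Estimate on the symplectic pairing integral
  have estIom : |∫ t in (0:ℝ)..1, om (X (v t)) (deriv v t - η • XH H (v t))|
      ≤ c₁ * (K + 1) * g := by
    have hvw : (∫ t in (0:ℝ)..1, ‖v t‖ * ‖deriv v t - η • XH H (v t)‖) ≤ K * g :=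
      CS_scalar (fun t => ‖v t‖) (fun t => ‖deriv v t - η • XH H (v t)‖) hvc.norm cw.norm
    have hw1 : (∫ t in (0:ℝ)..1, ‖deriv v t - η • XH H (v t)‖) ≤ g :=
      integral_norm_le_L2 _ cw
    calc |∫ t in (0:ℝ)..1, om (X (v t)) (deriv v t - η • XH H (v t))|
        ≤ ∫ t in (0:ℝ)..1, |om (X (v t)) (deriv v t - η • XH H (v t))| :=
          intervalIntegral.abs_integral_le_integral_abs zero_le_one
      _ ≤ ∫ t in (0:ℝ)..1, (c₁ * (‖v t‖ + 1)) * ‖deriv v t - η • XH H (v t)‖ := by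
          apply intervalIntegral.integral_mono_on zero_le_one
            ((continuous_om_comp cXv cw).abs.intervalIntegrable 0 1)
            (((continuous_const.mul (hvc.norm.add continuous_const)).mul
              cw.norm).intervalIntegrable 0 1)
          intro t _
          calc |om (X (v t)) (deriv v t - η • XH H (v t))|
              ≤ ‖X (v t)‖ * ‖deriv v t - η • XH H (v t)‖ := abs_om_le _ _
            _ ≤ (c₁ * (‖v t‖ + 1)) * ‖deriv v t - η • XH H (v t)‖ :=
              mul_le_mul_of_nonneg_right (hXb (v t)) (norm_nonneg _)
      _ = c₁ * ((∫ t in (0:ℝ)..1, ‖v t‖ * ‖deriv v t - η • XH H (v t)‖)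
            + ∫ t in (0:ℝ)..1, ‖deriv v t - η • XH H (v t)‖) := by
          have e : ∀ t : ℝ, (c₁ * (‖v t‖ + 1)) * ‖deriv v t - η • XH H (v t)‖
              = c₁ * (‖v t‖ * ‖deriv v t - η • XH H (v t)‖
                + ‖deriv v t - η • XH H (v t)‖) := by intro t; ring
          rw [intervalIntegral.integral_congr (fun t _ => e t),
            intervalIntegral.integral_const_mul,
            intervalIntegral.integral_add ((hvc.norm.fun_mul cw.norm).intervalIntegrable 0 1)
              (cw.norm.intervalIntegrable 0 1)]
      _ ≤ c₁ * (K * g + g) :=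
          mul_le_mul_of_nonneg_left (add_le_add hvw hw1) hc₁.le
      _ = c₁ * (K + 1) * g := by ring
  -- Estimate from (H1)
  have estH1 : c₂ * K ^ 2 - c₃ ≤ ∫ t in (0:ℝ)..1, fderiv ℝ H (v t) (X (v t)) := by
    have h := intervalIntegral.integral_mono_on (μ := MeasureTheory.volume) zero_le_one
      (((continuous_const.fun_mul (hvc.norm.fun_pow 2)).fun_sub continuous_const).intervalIntegrable 0 1)
      (cdHX.intervalIntegrable 0 1) (fun t _ => hH1 (v t))
    have e : (∫ t in (0:ℝ)..1, (c₂ * ‖v t‖ ^ 2 - c₃)) = c₂ * K ^ 2 - c₃ := by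
      rw [intervalIntegral.integral_sub
        ((continuous_const.fun_mul (hvc.norm.fun_pow 2)).intervalIntegrable 0 1)
        (continuous_const.intervalIntegrable 0 1),
        intervalIntegral.integral_const_mul, hK2]
      simp
    rw [e] at h
    exact h
  -- action identity
  have hAI := action_identity H hH X hX hLiou v hv hper1 η
  -- |η| bound ingredient
  have hEta : A * ((3/4) * (c₂ * K ^ 2)) ≤ 𝔞 + c₁ * (K + 1) * ε₁ := by
    have h1 : |η * ∫ t in (0:ℝ)..1, fderiv ℝ H (v t) (X (v t))|
        ≤ 𝔞 + A * ε₁ + c₁ * (K + 1) * ε₁ := by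
      rw [hAI]
      have t1 := abs_add_le (RabAction H v η + η * ∫ t in (0:ℝ)..1, H (v t))
        (-(∫ t in (0:ℝ)..1, om (X (v t)) (deriv v t - η • XH H (v t))))
      have t2 := abs_add_le (RabAction H v η) (η * ∫ t in (0:ℝ)..1, H (v t))
      rw [abs_neg] at t1
      have t3 : |η * ∫ t in (0:ℝ)..1, H (v t)| ≤ A * ε₁ := by
        rw [abs_mul]
        exact mul_le_mul_of_nonneg_left hHε hA0
      have t4 : c₁ * (K + 1) * g ≤ c₁ * (K + 1) * ε₁ :=
        mul_le_mul_of_nonneg_left hgε (mul_nonneg hc₁.le (by linarith))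
      have e : RabAction H v η + η * (∫ t in (0:ℝ)..1, H (v t))
          - (∫ t in (0:ℝ)..1, om (X (v t)) (deriv v t - η • XH H (v t)))
          = (RabAction H v η + η * ∫ t in (0:ℝ)..1, H (v t))
            + (-(∫ t in (0:ℝ)..1, om (X (v t)) (deriv v t - η • XH H (v t)))) := by ring
      rw [e]
      calc |(RabAction H v η + η * ∫ t in (0:ℝ)..1, H (v t))
            + (-(∫ t in (0:ℝ)..1, om (X (v t)) (deriv v t - η • XH H (v t))))|
          ≤ |RabAction H v η| + |η * ∫ t in (0:ℝ)..1, H (v t)|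
            + |∫ t in (0:ℝ)..1, om (X (v t)) (deriv v t - η • XH H (v t))| := by linarith
        _ ≤ 𝔞 + A * ε₁ + c₁ * (K + 1) * ε₁ := by linarith
    have h2 : A * (c₂ * K ^ 2 - c₃)
        ≤ |η * ∫ t in (0:ℝ)..1, fderiv ℝ H (v t) (X (v t))| := by
      rw [abs_mul]
      apply mul_le_mul_of_nonneg_left _ hA0
      exact le_trans estH1 (le_abs_self _)
    have h3 : (3/4) * (c₂ * K ^ 2) ≤ c₂ * K ^ 2 - c₃ - ε₁ := by linarith
    have h4 : A * ((3/4) * (c₂ * K ^ 2)) ≤ A * (c₂ * K ^ 2 - c₃ - ε₁) :=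
      mul_le_mul_of_nonneg_left h3 hA0
    have h5 : A * (c₂ * K ^ 2 - c₃ - ε₁) = A * (c₂ * K ^ 2 - c₃) - A * ε₁ := by ring
    linarith
  have hQpos : (0:ℝ) < (3/4) * (c₂ * K ^ 2) :=
    mul_pos (by norm_num) (mul_pos hc₂ (pow_pos hKpos 2))
  -- first conclusion
  have goal1 : A ≤ δ := arith1 c₁ c₂ δ 𝔞 ε₁ K A hc₂ hδ hc₁ hε₁pos hK1 hA0 hEta hSq2 hG5
  -- gradient L2 bound
  have hXHint : (∫ t in (0:ℝ)..1, ‖XH H (v t)‖ ^ 2) ≤ (h₁ + M * K) ^ 2 := by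
    have hvint : (∫ t in (0:ℝ)..1, ‖v t‖) ≤ K := integral_norm_le_L2 v hvc
    have e1 : (∫ t in (0:ℝ)..1, ‖XH H (v t)‖ ^ 2)
        = ∫ t in (0:ℝ)..1, ‖gradient H (v t)‖ ^ 2 := by
      apply intervalIntegral.integral_congr
      intro t _
      simp only [norm_XH]
    have e2 : (∫ t in (0:ℝ)..1, ‖gradient H (v t)‖ ^ 2)
        ≤ ∫ t in (0:ℝ)..1, (h₁ ^ 2 + (2 * h₁ * M) * ‖v t‖ + M ^ 2 * ‖v t‖ ^ 2) := by
      apply intervalIntegral.integral_mono_on zero_le_one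
        ((cgrad.norm.fun_pow 2).intervalIntegrable 0 1)
        ((((continuous_const.fun_add (continuous_const.fun_mul hvc.norm))).fun_add
          (continuous_const.fun_mul (hvc.norm.fun_pow 2))).intervalIntegrable 0 1)
      intro t _
      have hb := hGrad (v t)
      have h1 : ‖gradient H (v t)‖ ^ 2 ≤ (h₁ + M * ‖v t‖) ^ 2 :=
        pow_le_pow_left₀ (norm_nonneg _) hb 2
      have h2 : (h₁ + M * ‖v t‖) ^ 2
          = h₁ ^ 2 + (2 * h₁ * M) * ‖v t‖ + M ^ 2 * ‖v t‖ ^ 2 := by ring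
      linarith
    have e3 : (∫ t in (0:ℝ)..1, (h₁ ^ 2 + (2 * h₁ * M) * ‖v t‖ + M ^ 2 * ‖v t‖ ^ 2))
        = h₁ ^ 2 + (2 * h₁ * M) * (∫ t in (0:ℝ)..1, ‖v t‖) + M ^ 2 * K ^ 2 := by
      rw [intervalIntegral.integral_add
        ((continuous_const.fun_add (continuous_const.fun_mul hvc.norm)).intervalIntegrable 0 1)
        ((continuous_const.fun_mul (hvc.norm.fun_pow 2)).intervalIntegrable 0 1),
        intervalIntegral.integral_add (continuous_const.intervalIntegrable 0 1)
          ((continuous_const.fun_mul hvc.norm).intervalIntegrable 0 1),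
        intervalIntegral.integral_const_mul, intervalIntegral.integral_const_mul, hK2]
      simp
    rw [e1]
    have hfinal : h₁ ^ 2 + (2 * h₁ * M) * (∫ t in (0:ℝ)..1, ‖v t‖) + M ^ 2 * K ^ 2
        ≤ (h₁ + M * K) ^ 2 := by
      have h5 : (2 * h₁ * M) * (∫ t in (0:ℝ)..1, ‖v t‖) ≤ (2 * h₁ * M) * K :=
        mul_le_mul_of_nonneg_left hvint
          (mul_nonneg (mul_nonneg (by norm_num) hh₁) hM.le)
      have h6 : (h₁ + M * K) ^ 2 = h₁ ^ 2 + (2 * h₁ * M) * K + M ^ 2 * K ^ 2 := by ring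
      linarith
    linarith [e2, e3 ▸ e2]
  have hS : L2 (fun t => XH H (v t)) ≤ h₁ + M * K := by
    have h1 : L2 (fun t => XH H (v t)) ≤ Real.sqrt ((h₁ + M * K) ^ 2) :=
      Real.sqrt_le_sqrt hXHint
    rwa [Real.sqrt_sq (add_nonneg hh₁ (mul_nonneg hM.le hK0))] at h1
  set S := L2 (fun t => XH H (v t)) with hSdef
  have hS0 : 0 ≤ S := L2_nonneg _
  have hS2 : S ^ 2 = ∫ t in (0:ℝ)..1, ‖XH H (v t)‖ ^ 2 := L2_sq _
  have hDer : L2 (fun t => deriv v t) ≤ g + A * S := by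
    have hCS : |∫ t in (0:ℝ)..1, ⟪deriv v t - η • XH H (v t), XH H (v t)⟫| ≤ g * S :=
      CS_inner _ _ cw cXHv
    have hptw : ∀ t : ℝ, ‖deriv v t‖ ^ 2
        = ‖deriv v t - η • XH H (v t)‖ ^ 2
          + 2 * (η * ⟪deriv v t - η • XH H (v t), XH H (v t)⟫)
          + η ^ 2 * ‖XH H (v t)‖ ^ 2 := by
      intro t
      have e0 : deriv v t = (deriv v t - η • XH H (v t)) + η • XH H (v t) := by abel
      calc ‖deriv v t‖ ^ 2
          = ‖(deriv v t - η • XH H (v t)) + η • XH H (v t)‖ ^ 2 := by rw [← e0]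
        _ = ‖deriv v t - η • XH H (v t)‖ ^ 2
            + 2 * ⟪deriv v t - η • XH H (v t), η • XH H (v t)⟫
            + ‖η • XH H (v t)‖ ^ 2 := norm_add_sq_real _ _
        _ = ‖deriv v t - η • XH H (v t)‖ ^ 2
            + 2 * (η * ⟪deriv v t - η • XH H (v t), XH H (v t)⟫)
            + η ^ 2 * ‖XH H (v t)‖ ^ 2 := by
          rw [real_inner_smul_right, norm_smul, Real.norm_eq_abs, mul_pow, sq_abs]
    have hint : (∫ t in (0:ℝ)..1, ‖deriv v t‖ ^ 2)
        = g ^ 2 + 2 * (η * ∫ t in (0:ℝ)..1, ⟪deriv v t - η • XH H (v t), XH H (v t)⟫)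
          + η ^ 2 * S ^ 2 := by
      rw [intervalIntegral.integral_congr (fun t _ => hptw t)]
      have cin : Continuous fun t => ⟪deriv v t - η • XH H (v t), XH H (v t)⟫ :=
        cw.inner cXHv
      rw [intervalIntegral.integral_add
        (((cw.norm.fun_pow 2).fun_add (continuous_const.fun_mul (continuous_const.fun_mul cin))).intervalIntegrable 0 1)
        ((continuous_const.fun_mul (cXHv.norm.fun_pow 2)).intervalIntegrable 0 1),
        intervalIntegral.integral_add ((cw.norm.fun_pow 2).intervalIntegrable 0 1)
          ((continuous_const.fun_mul (continuous_const.fun_mul cin)).intervalIntegrable 0 1),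
        intervalIntegral.integral_const_mul, intervalIntegral.integral_const_mul,
        intervalIntegral.integral_const_mul, hg2, hS2]
    have hb : (∫ t in (0:ℝ)..1, ‖deriv v t‖ ^ 2) ≤ (g + A * S) ^ 2 := by
      rw [hint]
      have egoal : (g + A * S) ^ 2 = g ^ 2 + 2 * (A * (g * S)) + A ^ 2 * S ^ 2 := by ring
      have h1 : η * (∫ t in (0:ℝ)..1, ⟪deriv v t - η • XH H (v t), XH H (v t)⟫)
          ≤ A * (g * S) := by
        calc η * (∫ t in (0:ℝ)..1, ⟪deriv v t - η • XH H (v t), XH H (v t)⟫)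
            ≤ |η * (∫ t in (0:ℝ)..1, ⟪deriv v t - η • XH H (v t), XH H (v t)⟫)| :=
              le_abs_self _
          _ = A * |∫ t in (0:ℝ)..1, ⟪deriv v t - η • XH H (v t), XH H (v t)⟫| := abs_mul _ _
          _ ≤ A * (g * S) := mul_le_mul_of_nonneg_left hCS hA0
      have h2 : η ^ 2 * S ^ 2 = A ^ 2 * S ^ 2 := by rw [sq_abs]
      rw [egoal]
      linarith
    have h3 : L2 (fun t => deriv v t) ≤ Real.sqrt ((g + A * S) ^ 2) := Real.sqrt_le_sqrt hb
    rwa [Real.sqrt_sq (add_nonneg hg0 (mul_nonneg hA0 hS0))] at h3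
  -- final arithmetic for the derivative bound
  have hfin : (𝔞 + c₁ * (K + 1) * ε₁) * (h₁ + M * K) ≤ (δ / 2) * ((3/4) * (c₂ * K ^ 2)) :=
    arith2 c₁ c₂ δ 𝔞 ε₁ K M h₁ hc₂ hδ hc₁ hε₁pos hK1 h𝔞 hM hh₁ hG1 hG3 hε₁M
  have hR0 : (0:ℝ) ≤ h₁ + M * K := add_nonneg hh₁ (mul_nonneg hM.le hK0)
  have hAS : A * (h₁ + M * K) ≤ δ / 2 := by
    have h1 := mul_le_mul_of_nonneg_right hEta hR0
    have h2 : A * ((3/4) * (c₂ * K ^ 2)) * (h₁ + M * K)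
        = (A * (h₁ + M * K)) * ((3/4) * (c₂ * K ^ 2)) := by ring
    have h3 : (A * (h₁ + M * K)) * ((3/4) * (c₂ * K ^ 2))
        ≤ (δ / 2) * ((3/4) * (c₂ * K ^ 2)) := by linarith
    exact le_of_mul_le_mul_right h3 hQpos
  constructor
  · exact goal1
  · have hASS : A * S ≤ A * (h₁ + M * K) := mul_le_mul_of_nonneg_left hS hA0
    calc L2 (fun t => deriv v t) ≤ g + A * S := hDer
      _ ≤ ε₁ + A * (h₁ + M * K) := by linarith
      _ ≤ δ / 2 + δ / 2 := by linarith
      _ = δ := by ring
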